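/- arXiv:2212.13621 — 3 statements merged into one kernel-verified Lean document; each statement's English description precedes it below -/
import Mathlib

section
/- Let n ≥ 2, z : Fin n → ℝ, y : Fin n with z y = max_i z i, and β ≥ 0. Define the true-class gradient rescaling factor γ_y = ((∑_{i ≠ y} exp (β (z i))) · (∑_i exp (z i))) / ((∑_i exp (β (z i))) · (∑_{i ≠ y} exp (z i))). Then γ_y ≥ (1/n) · exp((1 - β) · (z y - m) - (M' - m)), where m = min_i z i and M' = max_{i ≠ y} z i. -/
open Real Finset

/-- Lower bound on the true-class gradient rescaling factor `γ_y`: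
`γ_y ≥ (1/n) * exp((1 - β)(z y - m) - (M' - m))` where `m = min_i z i` and
`M' = max_{i ≠ y} z i`. -/
theorem gamma_true_class_lower_bound (n : ℕ) (hn : 2 ≤ n) (z : Fin n → ℝ) (y : Fin n)
    (hy : z y = Finset.univ.sup' (Finset.univ_nonempty_iff.mpr ⟨y⟩) z)
    (β : ℝ) (hβ : 0 ≤ β) (γ m M' : ℝ)
    (hγ : γ = ((∑ i ∈ Finset.univ.erase y, Real.exp (β * z i)) * ∑ i, Real.exp (z i)) /
      ((∑ i, Real.exp (β * z i)) * ∑ i ∈ Finset.univ.erase y, Real.exp (z i)))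
    (hm : m = Finset.univ.inf' (Finset.univ_nonempty_iff.mpr ⟨y⟩) z)
    (hM' : M' = (Finset.univ.erase y).sup'
      (by rw [← Finset.card_pos, Finset.card_erase_of_mem (Finset.mem_univ y),
        Finset.card_univ, Fintype.card_fin]; omega) z) :
    γ ≥ (1 / (n : ℝ)) * Real.exp ((1 - β) * (z y - m) - (M' - m)) := by
  have hne : (Finset.univ : Finset (Fin n)).Nonempty := Finset.univ_nonempty_iff.mpr ⟨y⟩
  have hne' : (Finset.univ.erase y).Nonempty := by
    rw [← Finset.card_pos, Finset.card_erase_of_mem (Finset.mem_univ y),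
      Finset.card_univ, Fintype.card_fin]; omega
  have hcard : (Finset.univ.erase y).card = n - 1 := by
    rw [Finset.card_erase_of_mem (Finset.mem_univ y), Finset.card_univ, Fintype.card_fin]
  have hcardR : ((Finset.univ.erase y).card : ℝ) = (n : ℝ) - 1 := by
    rw [hcard]; push_cast [Nat.cast_sub (by omega : 1 ≤ n)]; ring
  have hzy : ∀ i, z i ≤ z y := fun i => hy ▸ Finset.le_sup' z (Finset.mem_univ i)
  have hml : ∀ i, m ≤ z i := fun i => hm ▸ Finset.inf'_le z (Finset.mem_univ i)
  have hM'l : ∀ i ∈ Finset.univ.erase y, z i ≤ M' := fun i hi => hM' ▸ Finset.le_sup' z hi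
  set A := ∑ i ∈ Finset.univ.erase y, Real.exp (β * z i) with hA
  set B := ∑ i, Real.exp (z i) with hB
  set C := ∑ i, Real.exp (β * z i) with hC
  set D := ∑ i ∈ Finset.univ.erase y, Real.exp (z i) with hD
  have hApos : 0 < A := Finset.sum_pos (fun i _ => Real.exp_pos _) hne'
  have hBpos : 0 < B := Finset.sum_pos (fun i _ => Real.exp_pos _) hne
  have hCpos : 0 < C := Finset.sum_pos (fun i _ => Real.exp_pos _) hne
  have hDpos : 0 < D := Finset.sum_pos (fun i _ => Real.exp_pos _) hne'
  have hAge : ((n : ℝ) - 1) * Real.exp (β * m) ≤ A := by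
    calc ((n:ℝ)-1) * Real.exp (β*m) = ∑ _i ∈ Finset.univ.erase y, Real.exp (β*m) := by
          rw [Finset.sum_const, nsmul_eq_mul, hcardR]
      _ ≤ A := Finset.sum_le_sum fun i _ =>
          Real.exp_le_exp.mpr (mul_le_mul_of_nonneg_left (hml i) hβ)
  have hBge : Real.exp (z y) ≤ B :=
    Finset.single_le_sum (fun i _ => (Real.exp_pos _).le) (Finset.mem_univ y)
  have hCle : C ≤ (n:ℝ) * Real.exp (β * z y) := by
    calc C ≤ ∑ _i : Fin n, Real.exp (β * z y) :=
          Finset.sum_le_sum fun i _ =>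
            Real.exp_le_exp.mpr (mul_le_mul_of_nonneg_left (hzy i) hβ)
      _ = (n:ℝ) * Real.exp (β * z y) := by
          rw [Finset.sum_const, Finset.card_univ, Fintype.card_fin, nsmul_eq_mul]
  have hDle : D ≤ ((n:ℝ)-1) * Real.exp M' := by
    calc D ≤ ∑ i ∈ Finset.univ.erase y, Real.exp M' :=
          Finset.sum_le_sum fun i hi => Real.exp_le_exp.mpr (hM'l i hi)
      _ = ((n:ℝ)-1) * Real.exp M' := by rw [Finset.sum_const, nsmul_eq_mul, hcardR]
  have hn1 : (0:ℝ) < (n:ℝ) - 1 := by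
    have : (2:ℝ) ≤ (n:ℝ) := by exact_mod_cast hn
    linarith
  have hnpos : (0:ℝ) < (n:ℝ) := by linarith
  have key : (((n:ℝ)-1) * Real.exp (β*m) * Real.exp (z y)) /
      (((n:ℝ) * Real.exp (β * z y)) * (((n:ℝ)-1) * Real.exp M')) ≤ γ := by
    rw [hγ]
    apply div_le_div₀ (by positivity)
      (mul_le_mul hAge hBge (Real.exp_pos _).le hApos.le)
      (by positivity)
      (mul_le_mul hCle hDle hDpos.le (by positivity))
  refine le_trans (le_of_eq ?_) key
  rw [show (1-β)*(z y - m) - (M'-m) = (β*m + z y) - (β * z y + M') by ring,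
    Real.exp_sub, Real.exp_add, Real.exp_add]
  have e1 := Real.exp_pos (β * z y)
  have e2 := Real.exp_pos M'
  field_simp
end

section
/- Let n ≥ 2, z : Fin n → ℝ, y : Fin n with z y = max_i z i, β ≥ 0, and j : Fin n with j ≠ y. Define the off-class gradient rescaling factor γ_j = exp((β - 1) · z j) · (∑_i exp (z i)) / (∑_i exp (β (z i))). Then γ_j ≥ (1/n + ((n - 1)/n) · exp(m - M)) · exp((1 - β) · (M - z j)), where M = max_i z i and m = min_i z i. -/
open Real Finset

/-- Lower bound on the off-class gradient rescaling factor `γ_j` for `j ≠ y`: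
`γ_j ≥ (1/n + ((n-1)/n) * exp(m - M)) * exp((1 - β)(M - z j))` where `M = max_i z i`
and `m = min_i z i`. -/
theorem gamma_off_class_lower_bound (n : ℕ) (hn : 2 ≤ n) (z : Fin n → ℝ) (y : Fin n)
    (hy : z y = Finset.univ.sup' (Finset.univ_nonempty_iff.mpr ⟨y⟩) z)
    (β : ℝ) (hβ : 0 ≤ β) (j : Fin n) (hj : j ≠ y) (γ M m : ℝ)
    (hγ : γ = Real.exp ((β - 1) * z j) * (∑ i, Real.exp (z i)) / ∑ i, Real.exp (β * z i))
    (hM : M = Finset.univ.sup' (Finset.univ_nonempty_iff.mpr ⟨y⟩) z)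
    (hm : m = Finset.univ.inf' (Finset.univ_nonempty_iff.mpr ⟨y⟩) z) :
    γ ≥ (1 / (n : ℝ) + (((n : ℝ) - 1) / (n : ℝ)) * Real.exp (m - M)) *
      Real.exp ((1 - β) * (M - z j)) := by
  have hne : (Finset.univ : Finset (Fin n)).Nonempty := ⟨y, Finset.mem_univ y⟩
  have hMle : ∀ i, z i ≤ M := fun i => hM ▸ Finset.le_sup' z (Finset.mem_univ i)
  have hmle : ∀ i, m ≤ z i := fun i => hm ▸ Finset.inf'_le z (Finset.mem_univ i)
  have hzy : z y = M := by rw [hy, hM]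
  have hn0 : (n : ℝ) ≠ 0 := Nat.cast_ne_zero.mpr (by omega)
  have hnpos : (0:ℝ) < n := by positivity
  have hSβpos : 0 < ∑ i, Real.exp (β * z i) :=
    Finset.sum_pos (fun i _ => Real.exp_pos _) hne
  have hSβ : ∑ i, Real.exp (β * z i) ≤ (n : ℝ) * Real.exp (β * M) := by
    calc ∑ i, Real.exp (β * z i) ≤ ∑ _i : Fin n, Real.exp (β * M) :=
          Finset.sum_le_sum (fun i _ =>
            Real.exp_le_exp.mpr (mul_le_mul_of_nonneg_left (hMle i) hβ))
      _ = (n : ℝ) * Real.exp (β * M) := by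
          simp [Finset.sum_const, Finset.card_univ, nsmul_eq_mul]
  have hS : Real.exp M + ((n:ℝ) - 1) * Real.exp m ≤ ∑ i, Real.exp (z i) := by
    rw [← Finset.add_sum_erase Finset.univ _ (Finset.mem_univ y), hzy]
    have hcard : (Finset.univ.erase y).card = n - 1 := by
      rw [Finset.card_erase_of_mem (Finset.mem_univ y), Finset.card_univ, Fintype.card_fin]
    have h2 : ((n:ℝ) - 1) * Real.exp m ≤ ∑ i ∈ Finset.univ.erase y, Real.exp (z i) := by
      calc ((n:ℝ)-1) * Real.exp m = ∑ _i ∈ Finset.univ.erase y, Real.exp m := by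
            rw [Finset.sum_const, hcard, nsmul_eq_mul, Nat.cast_sub (by omega), Nat.cast_one]
        _ ≤ _ := Finset.sum_le_sum fun i _ => Real.exp_le_exp.mpr (hmle i)
    linarith
  have key : Real.exp ((β - 1) * z j) * (Real.exp M + ((n:ℝ)-1) * Real.exp m) /
      ((n:ℝ) * Real.exp (β * M)) ≤ γ := by
    rw [hγ]
    apply div_le_div₀ (by positivity) ?_ hSβpos hSβ
    exact mul_le_mul_of_nonneg_left hS (le_of_lt (Real.exp_pos _))
  refine le_trans (le_of_eq ?_) key
  rw [show (1 - β) * (M - z j) = (M + β * z j) - (β * M + z j) by ring,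
      show (β - 1) * z j = β * z j - z j by ring,
      Real.exp_sub, Real.exp_sub, Real.exp_add, Real.exp_add, Real.exp_sub]
  field_simp
end

section
/- Let B be a nonempty finite type, f : B → ℝ with f b > 0 for all b and ∑_b f b = 1, and a : B → ℝ with 0 ≤ a b ≤ 1 for all b. Set Acc = ∑_b f b · a b. If b : B satisfies Acc + f b - 1 > 0, then log(f b · a b) ≥ 1 - 1 / (Acc + f b - 1). -/
open Finset

/-- If `Acc + f b - 1 > 0` then `log (f b · a b) ≥ 1 - 1 / (Acc + f b - 1)`, combining the
Bonferroni inequality with `log x ≥ 1 - 1/x`. -/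
theorem log_joint_ge_one_sub_inv (B : Type*) [Fintype B] [Nonempty B]
    (f a : B → ℝ) (hf : ∀ b, 0 < f b) (hsum : ∑ b, f b = 1)
    (ha0 : ∀ b, 0 ≤ a b) (ha1 : ∀ b, a b ≤ 1) (Acc : ℝ) (hAcc : Acc = ∑ b, f b * a b)
    (b : B) (hb : 0 < Acc + f b - 1) :
    Real.log (f b * a b) ≥ 1 - 1 / (Acc + f b - 1) := by
  classical
  have hbon : Acc + f b - 1 ≤ f b * a b := by
    have h1 : Acc - f b * a b ≤ 1 - f b := by
      have : Acc - f b * a b = ∑ c ∈ univ.erase b, f c * a c := by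
        rw [hAcc, ← Finset.sum_erase_add _ _ (mem_univ b)]; ring
      rw [this]
      have : 1 - f b = ∑ c ∈ univ.erase b, f c := by
        rw [← hsum, ← Finset.sum_erase_add _ _ (mem_univ b)]; ring
      rw [this]
      exact Finset.sum_le_sum fun c _ => by
        nlinarith [hf c, ha1 c, ha0 c]
    linarith
  have hpos : (0:ℝ) < f b * a b := lt_of_lt_of_le hb hbon
  have h2 : 1 - 1 / (f b * a b) ≤ Real.log (f b * a b) := by
    have := Real.log_le_sub_one_of_pos (x := 1 / (f b * a b)) (by positivity)
    rw [Real.log_div one_ne_zero (ne_of_gt hpos), Real.log_one] at this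
    linarith
  have h3 : 1 - 1 / (Acc + f b - 1) ≤ 1 - 1 / (f b * a b) := by
    have := one_div_le_one_div_of_le hb hbon
    linarith
  linarith
end
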